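/- If C = C₁ ⊗̃ C₂ is separable with C₁ ∈ S₂(H₁), C₂ ∈ S₂(H₂), and Δ ∈ S₂(H₂) satisfies ⟨C₂, Δ⟩ ≠ 0, then T₂(C, Δ) = ⟨C₂, Δ⟩ C₁ and T₁(C, T₂(C, Δ)) = ⟨C₂, Δ⟩ ‖C₁‖₂² C₂; consequently D₀ = ‖C‖₂² − ‖T₁(C, T₂(C,Δ))‖₂²/‖T₂(C,Δ)‖₂² = 0. -/
import Mathlib


open scoped InnerProductSpace
set_option maxHeartbeats 1000000
noncomputable section

/-- Hilbert–Schmidt inner product of two operators with respect to a Hilbert basis. -/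
def hsInner {ι E : Type*} [NormedAddCommGroup E] [InnerProductSpace ℝ E]
    (b : HilbertBasis ι ℝ E) (A B : E →L[ℝ] E) : ℝ :=
  ∑' i, ⟪A (b i), B (b i)⟫_ℝ

/-- Hilbert–Schmidt norm. -/
def hsNorm {ι E : Type*} [NormedAddCommGroup E] [InnerProductSpace ℝ E]
    (b : HilbertBasis ι ℝ E) (A : E →L[ℝ] E) : ℝ :=
  Real.sqrt (hsInner b A A)

/-- Being a Hilbert–Schmidt operator. -/
def IsHS {ι E : Type*} [NormedAddCommGroup E] [InnerProductSpace ℝ E]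
    (b : HilbertBasis ι ℝ E) (A : E →L[ℝ] E) : Prop :=
  Summable fun i => ‖A (b i)‖ ^ 2

section Aux
variable {ι κ E : Type*} [NormedAddCommGroup E] [InnerProductSpace ℝ E]

lemma summable_inner_sq (c : HilbertBasis κ ℝ E) (x : E) :
    Summable fun m => ⟪x, c m⟫_ℝ ^ 2 := by
  have h := c.summable_inner_mul_inner x x
  refine h.congr fun m => ?_
  rw [sq, real_inner_comm (c m) x]

lemma tsum_inner_sq (c : HilbertBasis κ ℝ E) (x : E) :
    ∑' m, ⟪x, c m⟫_ℝ ^ 2 = ‖x‖ ^ 2 := by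
  have h := c.tsum_inner_mul_inner x x
  rw [real_inner_self_eq_norm_sq] at h
  rw [← h]
  exact tsum_congr fun m => by rw [sq, real_inner_comm (c m) x]

variable [CompleteSpace E]

lemma key_summable (b : HilbertBasis ι ℝ E) (c : HilbertBasis κ ℝ E) {C : E →L[ℝ] E}
    (hC : IsHS b C) : Summable fun p : ι × κ => ⟪C (b p.1), c p.2⟫_ℝ ^ 2 := by
  have h1 : ∀ i : ι, Summable fun m => ⟪C (b i), c m⟫_ℝ ^ 2 := fun i => summable_inner_sq c _
  have h2 : Summable fun i => ∑' m, ⟪C (b i), c m⟫_ℝ ^ 2 := by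
    refine hC.congr fun i => ?_
    exact (tsum_inner_sq c (C (b i))).symm
  have h0 : (0 : (ι × κ) → ℝ) ≤ fun p : ι × κ => ⟪C (b p.1), c p.2⟫_ℝ ^ 2 :=
    fun p => sq_nonneg _
  exact (summable_prod_of_nonneg h0).mpr ⟨h1, h2⟩

lemma key_summable_mul (b : HilbertBasis ι ℝ E) (c : HilbertBasis κ ℝ E) {C D : E →L[ℝ] E}
    (hC : IsHS b C) (hD : IsHS b D) :
    Summable fun p : ι × κ => ⟪C (b p.1), c p.2⟫_ℝ * ⟪D (b p.1), c p.2⟫_ℝ := by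
  apply Summable.of_abs
  refine Summable.of_nonneg_of_le (fun p => abs_nonneg _) (fun p => ?_)
    ((key_summable b c hC).add (key_summable b c hD))
  set a := ⟪C (b p.1), c p.2⟫_ℝ
  set d := ⟪D (b p.1), c p.2⟫_ℝ
  rw [abs_mul]
  nlinarith [sq_nonneg (|a| - |d|), sq_abs a, sq_abs d, abs_nonneg a, abs_nonneg d]

lemma hsInner_eq_adjoint (b : HilbertBasis ι ℝ E) (c : HilbertBasis κ ℝ E) {C D : E →L[ℝ] E}
    (hC : IsHS b C) (hD : IsHS b D) :
    hsInner b C D = ∑' m, ⟪ContinuousLinearMap.adjoint C (c m),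
      ContinuousLinearMap.adjoint D (c m)⟫_ℝ := by
  have hsum := key_summable_mul b c hC hD
  have h1 : ∀ i, ⟪C (b i), D (b i)⟫_ℝ = ∑' m, ⟪C (b i), c m⟫_ℝ * ⟪D (b i), c m⟫_ℝ := by
    intro i
    rw [← c.tsum_inner_mul_inner (C (b i)) (D (b i))]
    exact tsum_congr fun m => by rw [real_inner_comm (c m) (D (b i))]
  have h2 : ∀ m, ⟪ContinuousLinearMap.adjoint C (c m), ContinuousLinearMap.adjoint D (c m)⟫_ℝ
      = ∑' i, ⟪C (b i), c m⟫_ℝ * ⟪D (b i), c m⟫_ℝ := by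
    intro m
    rw [← b.tsum_inner_mul_inner]
    refine tsum_congr fun i => ?_
    rw [ContinuousLinearMap.adjoint_inner_left, ContinuousLinearMap.adjoint_inner_right,
      real_inner_comm (c m) (C (b i))]
  unfold hsInner
  rw [tsum_congr h1, tsum_congr h2]
  calc ∑' i, ∑' m, ⟪C (b i), c m⟫_ℝ * ⟪D (b i), c m⟫_ℝ
      = ∑' p : ι × κ, ⟪C (b p.1), c p.2⟫_ℝ * ⟪D (b p.1), c p.2⟫_ℝ := (Summable.tsum_prod hsum).symm
    _ = ∑' q : κ × ι, ⟪C (b q.2), c q.1⟫_ℝ * ⟪D (b q.2), c q.1⟫_ℝ :=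
        ((Equiv.prodComm κ ι).tsum_eq _).symm
    _ = ∑' m, ∑' i, ⟪C (b i), c m⟫_ℝ * ⟪D (b i), c m⟫_ℝ := Summable.tsum_prod hsum.prod_symm

lemma isHS_adjoint (b : HilbertBasis ι ℝ E) (c : HilbertBasis κ ℝ E) {C : E →L[ℝ] E}
    (hC : IsHS b C) : IsHS c (ContinuousLinearMap.adjoint C) := by
  have h0 : (0 : (κ × ι) → ℝ) ≤ fun q : κ × ι => ⟪C (b q.2), c q.1⟫_ℝ ^ 2 :=
    fun q => sq_nonneg _
  have hsw : Summable fun q : κ × ι => ⟪C (b q.2), c q.1⟫_ℝ ^ 2 :=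
    (key_summable b c hC).prod_symm
  have h := ((summable_prod_of_nonneg h0).mp hsw).2
  refine h.congr fun m => ?_
  rw [← tsum_inner_sq b (ContinuousLinearMap.adjoint C (c m))]
  refine tsum_congr fun i => ?_
  rw [ContinuousLinearMap.adjoint_inner_left, real_inner_comm (c m) (C (b i))]

lemma isHS_indep (b : HilbertBasis ι ℝ E) (c : HilbertBasis κ ℝ E) {C : E →L[ℝ] E}
    (hC : IsHS b C) : IsHS c C := by
  have h := isHS_adjoint c c (isHS_adjoint b c hC)
  rwa [ContinuousLinearMap.adjoint_adjoint] at h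

lemma hsInner_indep (b : HilbertBasis ι ℝ E) (c : HilbertBasis κ ℝ E) {C D : E →L[ℝ] E}
    (hC : IsHS b C) (hD : IsHS b D) : hsInner b C D = hsInner c C D := by
  rw [hsInner_eq_adjoint b c hC hD,
    show (∑' m, ⟪ContinuousLinearMap.adjoint C (c m),
      ContinuousLinearMap.adjoint D (c m)⟫_ℝ) = hsInner c (ContinuousLinearMap.adjoint C)
      (ContinuousLinearMap.adjoint D) from rfl,
    hsInner_eq_adjoint c c (isHS_adjoint b c hC) (isHS_adjoint b c hD)]
  simp_rw [ContinuousLinearMap.adjoint_adjoint]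
  rfl


lemma hsInner_comm (b : HilbertBasis ι ℝ E) (C D : E →L[ℝ] E) :
    hsInner b C D = hsInner b D C :=
  tsum_congr fun i => real_inner_comm _ _

lemma hsInner_smul_right (b : HilbertBasis ι ℝ E) (t : ℝ) (C D : E →L[ℝ] E) :
    hsInner b C (t • D) = t * hsInner b C D := by
  unfold hsInner
  rw [← tsum_mul_left]
  exact tsum_congr fun i => by
    rw [ContinuousLinearMap.smul_apply, real_inner_smul_right]

lemma hsInner_smul_left (b : HilbertBasis ι ℝ E) (t : ℝ) (C D : E →L[ℝ] E) :
    hsInner b (t • C) D = t * hsInner b C D := by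
  rw [hsInner_comm, hsInner_smul_right, hsInner_comm]

lemma isHS_smul (b : HilbertBasis ι ℝ E) (t : ℝ) {C : E →L[ℝ] E} (hC : IsHS b C) :
    IsHS b (t • C) := by
  refine ((hC.mul_left (t ^ 2))).congr fun i => ?_
  rw [ContinuousLinearMap.smul_apply, norm_smul, mul_pow, Real.norm_eq_abs, sq_abs]

lemma hsInner_self_eq (b : HilbertBasis ι ℝ E) (C : E →L[ℝ] E) :
    hsInner b C C = ∑' i, ‖C (b i)‖ ^ 2 :=
  tsum_congr fun i => real_inner_self_eq_norm_sq _

lemma hsInner_self_nonneg (b : HilbertBasis ι ℝ E) (C : E →L[ℝ] E) :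
    0 ≤ hsInner b C C := by
  rw [hsInner_self_eq]
  exact tsum_nonneg fun i => sq_nonneg _

lemma hsNorm_sq (b : HilbertBasis ι ℝ E) (C : E →L[ℝ] E) :
    hsNorm b C ^ 2 = hsInner b C C :=
  Real.sq_sqrt (hsInner_self_nonneg b C)

lemma summable_hsInner (b : HilbertBasis ι ℝ E) {C D : E →L[ℝ] E}
    (hC : IsHS b C) (hD : IsHS b D) :
    Summable fun i => ⟪C (b i), D (b i)⟫_ℝ := by
  apply Summable.of_abs
  refine Summable.of_nonneg_of_le (fun i => abs_nonneg _) (fun i => ?_) (hC.add hD)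
  refine (abs_real_inner_le_norm _ _).trans ?_
  nlinarith [sq_nonneg (‖C (b i)‖ - ‖D (b i)‖), norm_nonneg (C (b i)), norm_nonneg (D (b i))]

lemma eq_of_apply_basis_eq (b : HilbertBasis ι ℝ E) {X Y : E →L[ℝ] E}
    (h : ∀ j, X (b j) = Y (b j)) : X = Y := by
  refine ContinuousLinearMap.ext_on (s := Set.range b) ?_ ?_
  · exact Submodule.dense_iff_topologicalClosure_eq_top.mpr b.dense_span
  · rintro _ ⟨j, rfl⟩
    exact h j

lemma hs_ext (b : HilbertBasis ι ℝ E) {X Y : E →L[ℝ] E}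
    (h : ∀ A : E →L[ℝ] E, IsHS b A → hsInner b A X = hsInner b A Y) : X = Y := by
  classical
  have hb := b.orthonormal
  refine eq_of_apply_basis_eq b fun j => ?_
  refine ext_inner_left ℝ fun x => ?_
  set A : E →L[ℝ] E := (innerSL ℝ (b j)).smulRight x with hA
  have hAbi : ∀ i, A (b i) = (if i = j then (1:ℝ) else 0) • x := by
    intro i
    rw [hA, ContinuousLinearMap.smulRight_apply, innerSL_apply_apply]
    congr 1
    rw [real_inner_comm]
    exact orthonormal_iff_ite.mp hb i j
  have hAHS : IsHS b A := by
    refine summable_of_ne_finset_zero (s := {j}) fun i hi => ?_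
    rw [hAbi i, if_neg (by simpa using hi)]
    simp
  have hval : ∀ Z : E →L[ℝ] E, hsInner b A Z = ⟪x, Z (b j)⟫_ℝ := by
    intro Z
    unfold hsInner
    rw [tsum_eq_single j]
    · rw [hAbi j, if_pos rfl, one_smul]
    · intro i hi
      rw [hAbi i, if_neg hi, zero_smul, inner_zero_left]
  rw [← hval X, ← hval Y, h A hAHS]

lemma hsInner_self_ne_zero (b : HilbertBasis ι ℝ E) {C : E →L[ℝ] E}
    (hC : IsHS b C) (hne : C ≠ 0) : hsInner b C C ≠ 0 := by
  intro h0
  apply hne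
  have key : ∀ j, C (b j) = 0 := by
    intro j
    have hle : ‖C (b j)‖ ^ 2 ≤ ∑' i, ‖C (b i)‖ ^ 2 :=
      Summable.le_tsum hC j fun i _ => sq_nonneg _
    rw [← hsInner_self_eq, h0] at hle
    have : ‖C (b j)‖ ^ 2 = 0 := le_antisymm hle (sq_nonneg _)
    rw [pow_eq_zero_iff (by norm_num), norm_eq_zero] at this
    exact this
  exact eq_of_apply_basis_eq b fun j => by rw [key j]; simp

end Aux

/-- A realization of the Hilbert space `H` as the Hilbert tensor product `H₁ ⊗ H₂`,
together with the operator tensor product `⊗̃`: `tmul` is bilinear with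
`⟪u ⊗ v, w ⊗ z⟫ = ⟪u,w⟫⟪v,z⟫`, elementary tensors span a dense subspace, and
`otimes C₁ C₂` is the bounded operator with `(C₁ ⊗̃ C₂)(u ⊗ v) = C₁ u ⊗ C₂ v`. -/
structure HilbertTensorProduct (H₁ H₂ H : Type*) [NormedAddCommGroup H₁]
    [InnerProductSpace ℝ H₁] [NormedAddCommGroup H₂] [InnerProductSpace ℝ H₂]
    [NormedAddCommGroup H] [InnerProductSpace ℝ H] : Type _ where
  tmul : H₁ →ₗ[ℝ] H₂ →ₗ[ℝ] H
  inner_tmul : ∀ (u w : H₁) (v z : H₂),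
    ⟪tmul u v, tmul w z⟫_ℝ = ⟪u, w⟫_ℝ * ⟪v, z⟫_ℝ
  dense_span : (Submodule.span ℝ
    (Set.range fun p : H₁ × H₂ => tmul p.1 p.2)).topologicalClosure = ⊤
  otimes : (H₁ →L[ℝ] H₁) → (H₂ →L[ℝ] H₂) → (H →L[ℝ] H)
  otimes_tmul : ∀ (C₁ : H₁ →L[ℝ] H₁) (C₂ : H₂ →L[ℝ] H₂) (u : H₁) (v : H₂),
    otimes C₁ C₂ (tmul u v) = tmul (C₁ u) (C₂ v)

section Tensor
variable {ι₁ ι₂ κ H₁ H₂ H : Type*}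
variable [NormedAddCommGroup H₁] [InnerProductSpace ℝ H₁] [CompleteSpace H₁]
variable [NormedAddCommGroup H₂] [InnerProductSpace ℝ H₂] [CompleteSpace H₂]
variable [NormedAddCommGroup H] [InnerProductSpace ℝ H] [CompleteSpace H]

lemma norm_tmul (P : HilbertTensorProduct H₁ H₂ H) (u : H₁) (v : H₂) :
    ‖P.tmul u v‖ = ‖u‖ * ‖v‖ := by
  have h := P.inner_tmul u u v v
  rw [real_inner_self_eq_norm_sq, real_inner_self_eq_norm_sq, real_inner_self_eq_norm_sq] at h
  have h2 : ‖P.tmul u v‖ ^ 2 = (‖u‖ * ‖v‖) ^ 2 := by rw [h]; ring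
  calc ‖P.tmul u v‖ = Real.sqrt (‖P.tmul u v‖ ^ 2) := (Real.sqrt_sq (norm_nonneg _)).symm
    _ = Real.sqrt ((‖u‖ * ‖v‖) ^ 2) := by rw [h2]
    _ = ‖u‖ * ‖v‖ := Real.sqrt_sq (by positivity)

/-- `tmul u ·` as a continuous linear map. -/
def tmulRight (P : HilbertTensorProduct H₁ H₂ H) (u : H₁) : H₂ →L[ℝ] H :=
  LinearMap.mkContinuous (P.tmul u) ‖u‖ fun v => le_of_eq (norm_tmul P u v)

/-- `tmul · v` as a continuous linear map. -/
def tmulLeft (P : HilbertTensorProduct H₁ H₂ H) (v : H₂) : H₁ →L[ℝ] H :=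
  LinearMap.mkContinuous (P.tmul.flip v) ‖v‖ fun u => by
    have : P.tmul.flip v u = P.tmul u v := rfl
    rw [this, norm_tmul P u v, mul_comm]

lemma tensor_orthonormal (P : HilbertTensorProduct H₁ H₂ H)
    (b₁ : HilbertBasis ι₁ ℝ H₁) (b₂ : HilbertBasis ι₂ ℝ H₂) :
    Orthonormal ℝ fun p : ι₁ × ι₂ => P.tmul (b₁ p.1) (b₂ p.2) := by
  classical
  rw [orthonormal_iff_ite]
  rintro ⟨i, j⟩ ⟨i', j'⟩
  rw [P.inner_tmul, orthonormal_iff_ite.mp b₁.orthonormal i i',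
    orthonormal_iff_ite.mp b₂.orthonormal j j']
  by_cases hi : i = i' <;> by_cases hj : j = j' <;> simp [hi, hj, Prod.ext_iff]

lemma tensor_dense (P : HilbertTensorProduct H₁ H₂ H)
    (b₁ : HilbertBasis ι₁ ℝ H₁) (b₂ : HilbertBasis ι₂ ℝ H₂) :
    ⊤ ≤ (Submodule.span ℝ
      (Set.range fun p : ι₁ × ι₂ => P.tmul (b₁ p.1) (b₂ p.2))).topologicalClosure := by
  set K := (Submodule.span ℝ
    (Set.range fun p : ι₁ × ι₂ => P.tmul (b₁ p.1) (b₂ p.2))).topologicalClosure with hK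
  have hKclosed : IsClosed (K : Set H) := Submodule.isClosed_topologicalClosure _
  have step1 : ∀ (i : ι₁) (v : H₂), P.tmul (b₁ i) v ∈ K := by
    intro i v
    set S : Submodule ℝ H₂ := K.comap (tmulRight P (b₁ i) : H₂ →ₗ[ℝ] H) with hS
    have hSclosed : IsClosed (S : Set H₂) :=
      hKclosed.preimage (tmulRight P (b₁ i)).continuous
    have hrange : Set.range b₂ ⊆ S := by
      rintro _ ⟨j, rfl⟩
      show P.tmul (b₁ i) (b₂ j) ∈ K
      exact Submodule.le_topologicalClosure _ (Submodule.subset_span ⟨(i, j), rfl⟩)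
    have hspan : (Submodule.span ℝ (Set.range b₂)).topologicalClosure ≤ S :=
      Submodule.topologicalClosure_minimal _ (Submodule.span_le.mpr hrange) hSclosed
    rw [b₂.dense_span] at hspan
    exact hspan Submodule.mem_top
  have step2 : ∀ (u : H₁) (v : H₂), P.tmul u v ∈ K := by
    intro u v
    set S : Submodule ℝ H₁ := K.comap (tmulLeft P v : H₁ →ₗ[ℝ] H) with hS
    have hSclosed : IsClosed (S : Set H₁) := hKclosed.preimage (tmulLeft P v).continuous
    have hrange : Set.range b₁ ⊆ S := by
      rintro _ ⟨i, rfl⟩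
      show P.tmul (b₁ i) v ∈ K
      exact step1 i v
    have hspan : (Submodule.span ℝ (Set.range b₁)).topologicalClosure ≤ S :=
      Submodule.topologicalClosure_minimal _ (Submodule.span_le.mpr hrange) hSclosed
    rw [b₁.dense_span] at hspan
    exact hspan Submodule.mem_top
  have hall : (Submodule.span ℝ
      (Set.range fun p : H₁ × H₂ => P.tmul p.1 p.2)).topologicalClosure ≤ K := by
    refine Submodule.topologicalClosure_minimal _ (Submodule.span_le.mpr ?_) hKclosed
    rintro _ ⟨⟨u, v⟩, rfl⟩
    exact step2 u v
  rw [P.dense_span] at hall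
  exact hall

/-- The tensor-product Hilbert basis. -/
def tensorBasis (P : HilbertTensorProduct H₁ H₂ H)
    (b₁ : HilbertBasis ι₁ ℝ H₁) (b₂ : HilbertBasis ι₂ ℝ H₂) : HilbertBasis (ι₁ × ι₂) ℝ H :=
  HilbertBasis.mk (tensor_orthonormal P b₁ b₂) (tensor_dense P b₁ b₂)

lemma tensorBasis_apply (P : HilbertTensorProduct H₁ H₂ H)
    (b₁ : HilbertBasis ι₁ ℝ H₁) (b₂ : HilbertBasis ι₂ ℝ H₂) (p : ι₁ × ι₂) :
    tensorBasis P b₁ b₂ p = P.tmul (b₁ p.1) (b₂ p.2) := by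
  have := HilbertBasis.coe_mk (tensor_orthonormal P b₁ b₂) (tensor_dense P b₁ b₂)
  exact congrFun this p

end Tensor

section Otimes
variable {ι₁ ι₂ κ H₁ H₂ H : Type*}
variable [NormedAddCommGroup H₁] [InnerProductSpace ℝ H₁] [CompleteSpace H₁]
variable [NormedAddCommGroup H₂] [InnerProductSpace ℝ H₂] [CompleteSpace H₂]
variable [NormedAddCommGroup H] [InnerProductSpace ℝ H] [CompleteSpace H]

lemma isHS_otimes_tb (P : HilbertTensorProduct H₁ H₂ H)
    (b₁ : HilbertBasis ι₁ ℝ H₁) (b₂ : HilbertBasis ι₂ ℝ H₂)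
    {A : H₁ →L[ℝ] H₁} {B : H₂ →L[ℝ] H₂} (hA : IsHS b₁ A) (hB : IsHS b₂ B) :
    IsHS (tensorBasis P b₁ b₂) (P.otimes A B) := by
  refine (hA.mul_of_nonneg hB (fun i => sq_nonneg _) fun j => sq_nonneg _).congr fun p => ?_
  rw [tensorBasis_apply, P.otimes_tmul, norm_tmul, mul_pow]

lemma hsInner_otimes_tb (P : HilbertTensorProduct H₁ H₂ H)
    (b₁ : HilbertBasis ι₁ ℝ H₁) (b₂ : HilbertBasis ι₂ ℝ H₂)
    {A A' : H₁ →L[ℝ] H₁} {B B' : H₂ →L[ℝ] H₂}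
    (hA : IsHS b₁ A) (hA' : IsHS b₁ A') (hB : IsHS b₂ B) (hB' : IsHS b₂ B') :
    hsInner (tensorBasis P b₁ b₂) (P.otimes A B) (P.otimes A' B')
      = hsInner b₁ A A' * hsInner b₂ B B' := by
  have hf : Summable fun i => ⟪A (b₁ i), A' (b₁ i)⟫_ℝ := summable_hsInner b₁ hA hA'
  have hg : Summable fun j => ⟪B (b₂ j), B' (b₂ j)⟫_ℝ := summable_hsInner b₂ hB hB'
  have hfg : Summable fun p : ι₁ × ι₂ =>
      ⟪A (b₁ p.1), A' (b₁ p.1)⟫_ℝ * ⟪B (b₂ p.2), B' (b₂ p.2)⟫_ℝ :=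
    summable_mul_of_summable_norm (hf.abs.congr fun i => (Real.norm_eq_abs _).symm)
      (hg.abs.congr fun j => (Real.norm_eq_abs _).symm)
  have hterm : ∀ p : ι₁ × ι₂,
      ⟪P.otimes A B (tensorBasis P b₁ b₂ p), P.otimes A' B' (tensorBasis P b₁ b₂ p)⟫_ℝ
        = ⟪A (b₁ p.1), A' (b₁ p.1)⟫_ℝ * ⟪B (b₂ p.2), B' (b₂ p.2)⟫_ℝ := by
    intro p
    rw [tensorBasis_apply, P.otimes_tmul, P.otimes_tmul, P.inner_tmul]
  unfold hsInner
  rw [tsum_congr hterm, Summable.tsum_prod hfg]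
  calc ∑' i, ∑' j, ⟪A (b₁ i), A' (b₁ i)⟫_ℝ * ⟪B (b₂ j), B' (b₂ j)⟫_ℝ
      = ∑' i, ⟪A (b₁ i), A' (b₁ i)⟫_ℝ * ∑' j, ⟪B (b₂ j), B' (b₂ j)⟫_ℝ := by
        exact tsum_congr fun i => tsum_mul_left
    _ = (∑' i, ⟪A (b₁ i), A' (b₁ i)⟫_ℝ) * ∑' j, ⟪B (b₂ j), B' (b₂ j)⟫_ℝ := tsum_mul_right

lemma isHS_otimes (P : HilbertTensorProduct H₁ H₂ H)
    (b₁ : HilbertBasis ι₁ ℝ H₁) (b₂ : HilbertBasis ι₂ ℝ H₂) (b : HilbertBasis κ ℝ H)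
    {A : H₁ →L[ℝ] H₁} {B : H₂ →L[ℝ] H₂} (hA : IsHS b₁ A) (hB : IsHS b₂ B) :
    IsHS b (P.otimes A B) :=
  isHS_indep (tensorBasis P b₁ b₂) b (isHS_otimes_tb P b₁ b₂ hA hB)

lemma hsInner_otimes (P : HilbertTensorProduct H₁ H₂ H)
    (b₁ : HilbertBasis ι₁ ℝ H₁) (b₂ : HilbertBasis ι₂ ℝ H₂) (b : HilbertBasis κ ℝ H)
    {A A' : H₁ →L[ℝ] H₁} {B B' : H₂ →L[ℝ] H₂}
    (hA : IsHS b₁ A) (hA' : IsHS b₁ A') (hB : IsHS b₂ B) (hB' : IsHS b₂ B') :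
    hsInner b (P.otimes A B) (P.otimes A' B') = hsInner b₁ A A' * hsInner b₂ B B' := by
  rw [← hsInner_indep (tensorBasis P b₁ b₂) b (isHS_otimes_tb P b₁ b₂ hA hB)
    (isHS_otimes_tb P b₁ b₂ hA' hB'), hsInner_otimes_tb P b₁ b₂ hA hA' hB hB']

end Otimes

variable {ι₁ ι₂ κ H₁ H₂ H : Type*}
variable [NormedAddCommGroup H₁] [InnerProductSpace ℝ H₁] [CompleteSpace H₁]
variable [NormedAddCommGroup H₂] [InnerProductSpace ℝ H₂] [CompleteSpace H₂]
variable [NormedAddCommGroup H] [InnerProductSpace ℝ H] [CompleteSpace H]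

/-- `T₁` is the partial-trace type map `S₂(H₁ ⊗ H₂) × S₂(H₁) → S₂(H₂)` determined by
`T₁(A ⊗̃ B, C₁) = ⟨A, C₁⟩ B`; it is characterized by mapping Hilbert–Schmidt operators to
Hilbert–Schmidt operators and the duality identity `⟨B, T₁(C,C₁)⟩ = ⟨C, C₁ ⊗̃ B⟩`. -/
def IsT1 {ι₁ ι₂ κ H₁ H₂ H : Type*}
    [NormedAddCommGroup H₁] [InnerProductSpace ℝ H₁]
    [NormedAddCommGroup H₂] [InnerProductSpace ℝ H₂]
    [NormedAddCommGroup H] [InnerProductSpace ℝ H]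
    (P : HilbertTensorProduct H₁ H₂ H)
    (b₁ : HilbertBasis ι₁ ℝ H₁) (b₂ : HilbertBasis ι₂ ℝ H₂) (b : HilbertBasis κ ℝ H)
    (T₁ : (H →L[ℝ] H) → (H₁ →L[ℝ] H₁) → (H₂ →L[ℝ] H₂)) : Prop :=
  (∀ C C₁, IsHS b C → IsHS b₁ C₁ → IsHS b₂ (T₁ C C₁)) ∧
  (∀ C C₁ B, IsHS b C → IsHS b₁ C₁ → IsHS b₂ B →
      hsInner b₂ B (T₁ C C₁) = hsInner b C (P.otimes C₁ B))

/-- `T₂` is the map `S₂(H₁ ⊗ H₂) × S₂(H₂) → S₂(H₁)` determined by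
`T₂(A ⊗̃ B, C₂) = ⟨B, C₂⟩ A`; characterized by `⟨A, T₂(C,C₂)⟩ = ⟨C, A ⊗̃ C₂⟩`. -/
def IsT2 {ι₁ ι₂ κ H₁ H₂ H : Type*}
    [NormedAddCommGroup H₁] [InnerProductSpace ℝ H₁]
    [NormedAddCommGroup H₂] [InnerProductSpace ℝ H₂]
    [NormedAddCommGroup H] [InnerProductSpace ℝ H]
    (P : HilbertTensorProduct H₁ H₂ H)
    (b₁ : HilbertBasis ι₁ ℝ H₁) (b₂ : HilbertBasis ι₂ ℝ H₂) (b : HilbertBasis κ ℝ H)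
    (T₂ : (H →L[ℝ] H) → (H₂ →L[ℝ] H₂) → (H₁ →L[ℝ] H₁)) : Prop :=
  (∀ C C₂, IsHS b C → IsHS b₂ C₂ → IsHS b₁ (T₂ C C₂)) ∧
  (∀ C C₂ A, IsHS b C → IsHS b₂ C₂ → IsHS b₁ A →
      hsInner b₁ A (T₂ C C₂) = hsInner b C (P.otimes A C₂))

/-- if `C = C₁ ⊗̃ C₂` is separable and `⟨C₂, Δ⟩ ≠ 0`, then
`T₂(C,Δ) = ⟨C₂,Δ⟩ C₁`, `T₁(C, T₂(C,Δ)) = ⟨C₂,Δ⟩ ‖C₁‖₂² C₂`, and consequently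
`D₀ = ‖C‖₂² − ‖T₁(C, T₂(C,Δ))‖₂²/‖T₂(C,Δ)‖₂² = 0`. -/
theorem stmt11 (P : HilbertTensorProduct H₁ H₂ H)
    (b₁ : HilbertBasis ι₁ ℝ H₁) (b₂ : HilbertBasis ι₂ ℝ H₂) (b : HilbertBasis κ ℝ H)
    (T₁ : (H →L[ℝ] H) → (H₁ →L[ℝ] H₁) → (H₂ →L[ℝ] H₂))
    (T₂ : (H →L[ℝ] H) → (H₂ →L[ℝ] H₂) → (H₁ →L[ℝ] H₁))
    (hT₁ : IsT1 P b₁ b₂ b T₁) (hT₂ : IsT2 P b₁ b₂ b T₂)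
    (C₁ : H₁ →L[ℝ] H₁) (C₂ : H₂ →L[ℝ] H₂) (Δ : H₂ →L[ℝ] H₂)
    (hC₁ : IsHS b₁ C₁) (hC₂ : IsHS b₂ C₂) (hΔ : IsHS b₂ Δ)
    (hC₁ne : C₁ ≠ 0) (hinner : hsInner b₂ C₂ Δ ≠ 0)
    (C : H →L[ℝ] H) (hsep : C = P.otimes C₁ C₂) :
    T₂ C Δ = hsInner b₂ C₂ Δ • C₁ ∧
      T₁ C (T₂ C Δ) = (hsInner b₂ C₂ Δ * hsNorm b₁ C₁ ^ 2) • C₂ ∧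
      hsNorm b C ^ 2 - hsNorm b₂ (T₁ C (T₂ C Δ)) ^ 2 / hsNorm b₁ (T₂ C Δ) ^ 2 = 0 := by
  obtain ⟨hT₁mem, hT₁eq⟩ := hT₁
  obtain ⟨hT₂mem, hT₂eq⟩ := hT₂
  subst hsep
  set s : ℝ := hsInner b₂ C₂ Δ with hs
  set n₁ : ℝ := hsInner b₁ C₁ C₁ with hn₁
  set n₂ : ℝ := hsInner b₂ C₂ C₂ with hn₂
  have hCHS : IsHS b (P.otimes C₁ C₂) := isHS_otimes P b₁ b₂ b hC₁ hC₂
  have hn₁ne : n₁ ≠ 0 := hsInner_self_ne_zero b₁ hC₁ hC₁ne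
  have hn₁pos : 0 < n₁ := lt_of_le_of_ne (hsInner_self_nonneg b₁ C₁) (Ne.symm hn₁ne)
  -- Claim 1
  have claim1 : T₂ (P.otimes C₁ C₂) Δ = s • C₁ := by
    apply hs_ext b₁
    intro A hA
    rw [hT₂eq _ _ _ hCHS hΔ hA, hsInner_otimes P b₁ b₂ b hC₁ hA hC₂ hΔ,
      hsInner_smul_right, hsInner_comm b₁ A C₁, ← hs, mul_comm]
  have hsC₁ : IsHS b₁ (s • C₁) := isHS_smul b₁ s hC₁
  have hT2HS : IsHS b₁ (T₂ (P.otimes C₁ C₂) Δ) := hT₂mem _ _ hCHS hΔ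
  have hnorm₁ : hsNorm b₁ C₁ ^ 2 = n₁ := hsNorm_sq b₁ C₁
  -- Claim 2
  have claim2 : T₁ (P.otimes C₁ C₂) (T₂ (P.otimes C₁ C₂) Δ) = (s * n₁) • C₂ := by
    rw [claim1]
    apply hs_ext b₂
    intro B hB
    rw [hT₁eq _ _ _ hCHS hsC₁ hB, hsInner_otimes P b₁ b₂ b hC₁ hsC₁ hC₂ hB,
      hsInner_smul_right, hsInner_smul_right, hsInner_comm b₂ B C₂, ← hn₁]
  refine ⟨claim1, by rw [claim2, hnorm₁], ?_⟩
  -- norms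
  have e1 : hsNorm b (P.otimes C₁ C₂) ^ 2 = n₁ * n₂ := by
    rw [hsNorm_sq, hsInner_otimes P b₁ b₂ b hC₁ hC₁ hC₂ hC₂]
  have e2 : hsNorm b₂ (T₁ (P.otimes C₁ C₂) (T₂ (P.otimes C₁ C₂) Δ)) ^ 2
      = (s * n₁) ^ 2 * n₂ := by
    rw [claim2, hsNorm_sq, hsInner_smul_left, hsInner_smul_right, ← hn₂]
    ring
  have e3 : hsNorm b₁ (T₂ (P.otimes C₁ C₂) Δ) ^ 2 = s ^ 2 * n₁ := by
    rw [claim1, hsNorm_sq, hsInner_smul_left, hsInner_smul_right, ← hn₁]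
    ring
  rw [e1, e2, e3]
  field_simp
  ring
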